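/- Let q = p^s with p prime and s > 1, let 0 < i < s with m = gcd(i, s), and suppose p^m ≥ 3. For x, y, z, w ∈ F_{q^2}, let M(x,y,z,w) be the 4×4 matrix over F_{q^2} with rows (1, 1, 1, 1), (x, y, z, w), (x^{p^i}, y^{p^i}, z^{p^i}, w^{p^i}), (x^{p^i+1}, y^{p^i+1}, z^{p^i+1}, w^{p^i+1}). Then for any three pairwise distinct elements x, y, z ∈ U_{q+1}, the number of elements w ∈ U_{q+1} \ {x, y, z} with det M(x,y,z,w) = 0 equals p^m − 2; equivalently, the blocks {x,y,z,w} ∈ binom(U_{q+1}, 4) with det M(x,y,z,w) = 0 form a 3-(q+1, 4, p^m − 2) design on the point set U_{q+1}. -/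

import Mathlib

/-! Put A = (w - y)(z - x) and B = (w - x)(z - y). Since x ↦ x ^ p ^ i is additive, the
determinant equals A B^(p^i) - B A^(p^i), so it vanishes exactly when the cross ratio A / B is
fixed by x ↦ x ^ p ^ i. On U_{q+1} the map x ↦ x ^ q is inversion, which preserves cross ratios,
so w ↦ A / B is an injective (Möbius) map from U_{q+1} \ {x} into F_q; both sets have q elements,
so it is onto, with y ↦ 0 and z ↦ 1. The points w sought thus correspond to the elements of
F_q ∩ F_{p^i} = F_{p^m} other than 0 and 1. -/

namespace FiniteField

variable {K : Type*} [Field K] [Fintype K]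

theorem ncard_pow_eq_one_of_dvd {d : ℕ} (hd : d ∣ Fintype.card K - 1) :
    {c : K | c ^ d = 1}.ncard = d := by
  classical
  have hd0 : 0 < d := Nat.pos_of_ne_zero fun h ↦ by
    have := Fintype.one_lt_card (α := K)
    rw [h, zero_dvd_iff] at hd
    omega
  obtain ⟨g, hg⟩ := IsCyclic.exists_ofOrder_eq_natCard (α := Kˣ)
  obtain ⟨k, hk⟩ := hd
  have hζ : IsPrimitiveRoot ((g ^ k : Kˣ) : K) d := by
    refine IsPrimitiveRoot.coe_units_iff.mpr ((hg ▸ IsPrimitiveRoot.orderOf g).pow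
      Nat.card_pos ?_)
    rw [Nat.card_eq_fintype_card, Fintype.card_units, hk, mul_comm]
  calc {c : K | c ^ d = 1}.ncard = (Polynomial.nthRootsFinset d (1 : K)).card := by
        rw [← Set.ncard_coe_finset]
        congr
        ext c
        simp [Polynomial.mem_nthRootsFinset hd0]
    _ = d := hζ.card_nthRootsFinset

theorem ncard_pow_eq_self_of_dvd {p n m : ℕ} (hK : Fintype.card K = p ^ n) (hmn : m ∣ n) :
    {c : K | c ^ p ^ m = c}.ncard = p ^ m := by
  have hpn : 1 < p ^ n := hK ▸ Fintype.one_lt_card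
  have hn : n ≠ 0 := by
    rintro rfl
    simp at hpn
  have hpm : 1 < p ^ m :=
    Nat.one_lt_pow (ne_zero_of_dvd_ne_zero hn hmn) ((Nat.one_lt_pow_iff hn).mp hpn)
  have hsplit : {c : K | c ^ p ^ m = c} = insert 0 {c : K | c ^ (p ^ m - 1) = 1} := by
    ext c
    rcases eq_or_ne c 0 with rfl | hc
    · simp [zero_pow (by omega : p ^ m ≠ 0)]
    · simp only [Set.mem_ofPred_eq, Set.mem_insert_iff, hc, false_or]
      conv_lhs => rw [← Nat.sub_add_cancel hpm.le, pow_succ, mul_eq_right₀ hc]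
  have hdvd : p ^ m - 1 ∣ Fintype.card K - 1 := by
    obtain ⟨k, rfl⟩ := hmn
    simpa [hK, pow_mul] using Nat.sub_dvd_pow_sub_pow (p ^ m) 1 k
  rw [hsplit, Set.ncard_insert_of_notMem (by simp [zero_pow (by omega : p ^ m - 1 ≠ 0)]),
    ncard_pow_eq_one_of_dvd hdvd]
  omega

end FiniteField

theorem pow_pow_gcd_eq_self_iff {M : Type*} [Monoid M] {p i s : ℕ} {c : M} :
    c ^ p ^ i.gcd s = c ↔ c ^ p ^ i = c ∧ c ^ p ^ s = c := by
  have h (n : ℕ) : c ^ p ^ n = c ↔ Function.IsPeriodicPt (· ^ p) n c := by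
    simp [Function.IsPeriodicPt, Function.IsFixedPt, pow_iterate]
  simp only [h]
  exact ⟨fun hc ↦ ⟨hc.trans_dvd (Nat.gcd_dvd_left i s),
    hc.trans_dvd (Nat.gcd_dvd_right i s)⟩, fun hc ↦ hc.1.gcd hc.2⟩

theorem det_ones_rows_mul {R : Type*} [CommRing R] (x y z w X Y Z W : R) :
    Matrix.det !![1, 1, 1, 1; x, y, z, w; X, Y, Z, W; x * X, y * Y, z * Z, w * W]
      = (w - y) * (z - x) * ((W - X) * (Z - Y)) - (w - x) * (z - y) * ((W - Y) * (Z - X)) := by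
  simp [Matrix.det_succ_row_zero, Fin.sum_univ_succ, Fin.succAbove]
  ring

section CrossRatio

variable {K : Type*} [Field K]

def crossRatio (x y z w : K) : K := (w - y) * (z - x) / ((w - x) * (z - y))

theorem map_crossRatio {L : Type*} [Field L] (σ : K →+* L) (x y z w : K) :
    σ (crossRatio x y z w) = crossRatio (σ x) (σ y) (σ z) (σ w) := by
  simp [crossRatio]

theorem crossRatio_inv {x y z w : K} (hx : x ≠ 0) (hy : y ≠ 0) (hz : z ≠ 0) (hw : w ≠ 0) :
    crossRatio x⁻¹ y⁻¹ z⁻¹ w⁻¹ = crossRatio x y z w := by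
  simp only [crossRatio, inv_sub_inv hw hy, inv_sub_inv hz hx, inv_sub_inv hw hx,
    inv_sub_inv hz hy, div_mul_div_comm]
  rw [show w * x * (z * y) = w * y * (z * x) by ring, div_div_div_cancel_right₀ (by simp [*])]
  congr 1 <;> ring

variable {x y z : K}

theorem crossRatio_injOn (hxy : x ≠ y) (hxz : x ≠ z) (hyz : y ≠ z) :
    Set.InjOn (crossRatio x y z) {w | w ≠ x} := by
  intro w₁ hw₁ w₂ hw₂ h
  have hzy : z - y ≠ 0 := sub_ne_zero.mpr hyz.symm
  rw [crossRatio, crossRatio, div_eq_div_iff (mul_ne_zero (sub_ne_zero.mpr hw₁) hzy)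
    (mul_ne_zero (sub_ne_zero.mpr hw₂) hzy)] at h
  have : (z - x) * (z - y) * (x - y) * (w₂ - w₁) = 0 := by linear_combination h
  simpa [sub_eq_zero, hxy, hxz.symm, hyz.symm, eq_comm] using this

theorem crossRatio_eq_zero_iff {w : K} (hxz : x ≠ z) (hyz : y ≠ z) (hwx : w ≠ x) :
    crossRatio x y z w = 0 ↔ w = y := by
  simp [crossRatio, sub_eq_zero, hxz.symm, hyz.symm, hwx]

theorem crossRatio_eq_one_iff {w : K} (hxy : x ≠ y) (hyz : y ≠ z) (hwx : w ≠ x) :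
    crossRatio x y z w = 1 ↔ w = z := by
  rw [crossRatio, div_eq_one_iff_eq (mul_ne_zero (sub_ne_zero.mpr hwx) (sub_ne_zero.mpr hyz.symm))]
  constructor
  · intro h
    have : (w - z) * (y - x) = 0 := by linear_combination h
    simpa [sub_eq_zero, hxy.symm] using this
  · rintro rfl
    ring

theorem det_eq_zero_iff_crossRatio_pow_eq_self (p : ℕ) [ExpChar K p] (k : ℕ) {w : K}
    (hyz : y ≠ z) (hwx : w ≠ x) :
    Matrix.det !![1, 1, 1, 1;
                  x, y, z, w;
                  x ^ p ^ k, y ^ p ^ k, z ^ p ^ k, w ^ p ^ k;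
                  x ^ (p ^ k + 1), y ^ (p ^ k + 1), z ^ (p ^ k + 1), w ^ (p ^ k + 1)] = 0 ↔
      crossRatio x y z w ^ p ^ k = crossRatio x y z w := by
  have hB : (w - x) * (z - y) ≠ 0 := mul_ne_zero (sub_ne_zero.mpr hwx) (sub_ne_zero.mpr hyz.symm)
  simp only [pow_succ', det_ones_rows_mul, ← sub_pow_expChar_pow, ← mul_pow]
  rw [crossRatio, div_pow, div_eq_div_iff (pow_ne_zero _ hB) hB, sub_eq_zero, eq_comm,
    mul_comm ((w - x) * (z - y))]

end CrossRatio

section UnitCircle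

variable {K : Type*} [Field K] {p s : ℕ} {x y z : K}

theorem crossRatio_pow_eq_self_of_pow_eq_one [ExpChar K p] {w : K}
    (hx : x ^ (p ^ s + 1) = 1) (hy : y ^ (p ^ s + 1) = 1) (hz : z ^ (p ^ s + 1) = 1)
    (hw : w ^ (p ^ s + 1) = 1) :
    crossRatio x y z w ^ p ^ s = crossRatio x y z w := by
  have hσ {u : K} (hu : u ^ (p ^ s + 1) = 1) : iterateFrobenius K p s u * u = 1 := by
    rwa [iterateFrobenius_def, ← pow_succ]
  rw [← iterateFrobenius_def, map_crossRatio, eq_inv_of_mul_eq_one_left (hσ hx),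
    eq_inv_of_mul_eq_one_left (hσ hy), eq_inv_of_mul_eq_one_left (hσ hz),
    eq_inv_of_mul_eq_one_left (hσ hw), crossRatio_inv (right_ne_zero_of_mul_eq_one (hσ hx))
    (right_ne_zero_of_mul_eq_one (hσ hy)) (right_ne_zero_of_mul_eq_one (hσ hz))
    (right_ne_zero_of_mul_eq_one (hσ hw))]

theorem image_crossRatio_unitCircle [Fintype K] [ExpChar K p]
    (hK : Fintype.card K = (p ^ s) ^ 2) (hx : x ^ (p ^ s + 1) = 1) (hy : y ^ (p ^ s + 1) = 1)
    (hz : z ^ (p ^ s + 1) = 1) (hxy : x ≠ y) (hxz : x ≠ z) (hyz : y ≠ z) :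
    crossRatio x y z '' {w | w ^ (p ^ s + 1) = 1 ∧ w ≠ x} = {c | c ^ p ^ s = c} := by
  have hU : {w : K | w ^ (p ^ s + 1) = 1}.ncard = p ^ s + 1 :=
    FiniteField.ncard_pow_eq_one_of_dvd ⟨p ^ s - 1, by simpa [hK] using Nat.sq_sub_sq (p ^ s) 1⟩
  refine Set.eq_of_subset_of_ncard_le ?_ ?_ (Set.toFinite _)
  · rintro _ ⟨w, ⟨hw, -⟩, rfl⟩
    exact crossRatio_pow_eq_self_of_pow_eq_one hx hy hz hw
  · rw [((crossRatio_injOn hxy hxz hyz).mono fun _ hw ↦ hw.2).ncard_image,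
      FiniteField.ncard_pow_eq_self_of_dvd (n := s * 2) (by rw [hK, pow_mul]) (dvd_mul_right s 2)]
    change p ^ s ≤ ({w : K | w ^ (p ^ s + 1) = 1} \ {x}).ncard
    rw [Set.ncard_sdiff_singleton_of_mem (s := {w : K | w ^ (p ^ s + 1) = 1}) hx, hU,
      Nat.add_sub_cancel]

theorem det_eq_zero_iff_crossRatio_mem [ExpChar K p] (i : ℕ) {w : K}
    (hx : x ^ (p ^ s + 1) = 1) (hy : y ^ (p ^ s + 1) = 1) (hz : z ^ (p ^ s + 1) = 1)
    (hw : w ^ (p ^ s + 1) = 1) (hxy : x ≠ y) (hxz : x ≠ z) (hyz : y ≠ z) (hwx : w ≠ x) :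
    (w ≠ y ∧ w ≠ z ∧
      Matrix.det !![1, 1, 1, 1;
                    x, y, z, w;
                    x ^ p ^ i, y ^ p ^ i, z ^ p ^ i, w ^ p ^ i;
                    x ^ (p ^ i + 1), y ^ (p ^ i + 1), z ^ (p ^ i + 1), w ^ (p ^ i + 1)] = 0) ↔
      crossRatio x y z w ∈ {c : K | c ^ p ^ i.gcd s = c} \ {0, 1} := by
  rw [det_eq_zero_iff_crossRatio_pow_eq_self p i hyz hwx, ne_eq, ne_eq,
    ← crossRatio_eq_zero_iff hxz hyz hwx, ← crossRatio_eq_one_iff hxy hyz hwx]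
  simp only [Set.mem_sdiff, Set.mem_ofPred_eq, pow_pow_gcd_eq_self_iff,
    crossRatio_pow_eq_self_of_pow_eq_one hx hy hz hw, Set.mem_insert_iff, Set.mem_singleton_iff]
  tauto

end UnitCircle

theorem stmt13_general (p s : ℕ) (hp : p.Prime) (q : ℕ) (hq : q = p ^ s)
    (i m : ℕ) (hm : m = Nat.gcd i s)
    (K : Type) [Field K] [Fintype K] (hK : Fintype.card K = q ^ 2)
    (x y z : K) (hx : x ^ (q + 1) = 1) (hy : y ^ (q + 1) = 1) (hz : z ^ (q + 1) = 1)
    (hxy : x ≠ y) (hxz : x ≠ z) (hyz : y ≠ z) :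
    {w : K | w ^ (q + 1) = 1 ∧ w ≠ x ∧ w ≠ y ∧ w ≠ z ∧
      Matrix.det !![1, 1, 1, 1;
                    x, y, z, w;
                    x ^ (p ^ i), y ^ (p ^ i), z ^ (p ^ i), w ^ (p ^ i);
                    x ^ (p ^ i + 1), y ^ (p ^ i + 1), z ^ (p ^ i + 1), w ^ (p ^ i + 1)]
        = 0}.ncard = p ^ m - 2 := by
  subst hq hm
  have : Fact p.Prime := ⟨hp⟩
  have : CharP K p := charP_of_card_eq_prime_pow (f := s * 2) (by rw [hK, pow_mul])
  set T : Set K := {c | c ^ p ^ i.gcd s = c} \ {0, 1}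
  have hTF : T ⊆ {c | c ^ p ^ s = c} := fun c hc ↦ (pow_pow_gcd_eq_self_iff.mp hc.1).2
  have h01 : {0, 1} ⊆ {c : K | c ^ p ^ i.gcd s = c} := by
    simp [Set.insert_subset_iff, hp.ne_zero]
  have hcount : ({w | w ^ (p ^ s + 1) = 1 ∧ w ≠ x} ∩ crossRatio x y z ⁻¹' T).ncard =
      p ^ i.gcd s - 2 := by
    rw [← ((crossRatio_injOn hxy hxz hyz).mono fun _ hw ↦ hw.1.2).ncard_image,
      Set.image_inter_preimage, image_crossRatio_unitCircle hK hx hy hz hxy hxz hyz,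
      Set.inter_eq_right.mpr hTF, Set.ncard_sdiff h01,
      FiniteField.ncard_pow_eq_self_of_dvd (n := s * 2) (by rw [hK, pow_mul])
        ((Nat.gcd_dvd_right i s).mul_right 2), Set.ncard_pair zero_ne_one]
  convert hcount using 2
  ext w
  simp only [Set.mem_inter_iff, Set.mem_preimage, Set.mem_ofPred_eq, and_assoc]
  exact and_congr_right fun hw ↦ and_congr_right fun hwx ↦
    det_eq_zero_iff_crossRatio_mem i hx hy hz hw hxy hxz hyz hwx

theorem stmt13 (p s : ℕ) (hp : p.Prime) (hs : 1 < s) (q : ℕ) (hq : q = p ^ s)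
    (i m : ℕ) (hi0 : 0 < i) (his : i < s) (hm : m = Nat.gcd i s) (hpm : 3 ≤ p ^ m)
    (K : Type) [Field K] [Fintype K] [DecidableEq K] (hK : Fintype.card K = q ^ 2)
    (x y z : K) (hx : x ^ (q + 1) = 1) (hy : y ^ (q + 1) = 1) (hz : z ^ (q + 1) = 1)
    (hxy : x ≠ y) (hxz : x ≠ z) (hyz : y ≠ z) :
    {w : K | w ^ (q + 1) = 1 ∧ w ≠ x ∧ w ≠ y ∧ w ≠ z ∧
      Matrix.det !![1, 1, 1, 1;
                    x, y, z, w;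
                    x ^ (p ^ i), y ^ (p ^ i), z ^ (p ^ i), w ^ (p ^ i);
                    x ^ (p ^ i + 1), y ^ (p ^ i + 1), z ^ (p ^ i + 1), w ^ (p ^ i + 1)]
        = 0}.ncard = p ^ m - 2 :=
  stmt13_general p s hp q hq i m hm K hK x y z hx hy hz hxy hxz hyz
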